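/- arXiv:2106.09565 — 6 statements merged into one kernel-verified Lean document; each statement's English description precedes it below -/
import Mathlib

section
/- Let x₁,…,x_m be nonnegative reals summing to 1. Let {S_k}_{k=1}^K and {R_j}_{j=1}^J be two partitions of {1,…,m} such that every intersection S_k ∩ R_j contains at most one element. Then (1 − Σ_k (Σ_{i∈S_k} x_i)²) + (1 − Σ_j (Σ_{i∈R_j} x_i)²) ≥ 1 − Σ_i x_i². -/
open Finset

lemma block_sum_sq {m n : ℕ} (x : Fin m → ℝ) (P : Fin n → Finset (Fin m))
    (hdisj : ∀ k k', k ≠ k' → Disjoint (P k) (P k'))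
    (hcov : ∀ i, ∃ k, i ∈ P k) :
    ∑ k, (∑ i ∈ P k, x i)^2 =
      ∑ i, (x i)^2 +
        ∑ p ∈ univ.filter (fun p : Fin m × Fin m => p.1 ≠ p.2 ∧ ∃ k, p.1 ∈ P k ∧ p.2 ∈ P k),
          x p.1 * x p.2 := by
  have h1 : ∀ k, (∑ i ∈ P k, x i)^2 = ∑ p ∈ (P k) ×ˢ (P k), x p.1 * x p.2 := by
    intro k
    rw [sq, Finset.sum_mul_sum, Finset.sum_product]
  have hdisj' : Set.PairwiseDisjoint (univ : Finset (Fin n))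
      (fun k => (P k) ×ˢ (P k)) := by
    intro k _ k' _ hkk'
    exact Finset.disjoint_product.mpr (Or.inl (hdisj k k' hkk'))
  have h2 : ∑ k, (∑ i ∈ P k, x i)^2 =
      ∑ p ∈ univ.biUnion (fun k => (P k) ×ˢ (P k)), x p.1 * x p.2 := by
    rw [Finset.sum_biUnion hdisj']
    exact Finset.sum_congr rfl fun k _ => h1 k
  have hB : univ.biUnion (fun k => (P k) ×ˢ (P k)) =
      univ.filter (fun p : Fin m × Fin m => ∃ k, p.1 ∈ P k ∧ p.2 ∈ P k) := by
    ext p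
    simp [Finset.mem_biUnion, Finset.mem_product]
  rw [h2, hB, ← Finset.sum_filter_add_sum_filter_not _ (fun p : Fin m × Fin m => p.1 = p.2)]
  congr 1
  · have : (univ.filter (fun p : Fin m × Fin m => ∃ k, p.1 ∈ P k ∧ p.2 ∈ P k)).filter
        (fun p => p.1 = p.2) = (univ : Finset (Fin m)).diag := by
      ext p
      simp only [Finset.mem_filter, Finset.mem_diag, Finset.mem_univ, true_and]
      constructor
      · rintro ⟨_, h⟩; exact h
      · intro h
        obtain ⟨k, hk⟩ := hcov p.1
        exact ⟨⟨k, hk, h ▸ hk⟩, h⟩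
    rw [this, Finset.sum_diag]
    ring_nf
  · rw [Finset.filter_filter]
    congr 1
    ext p
    simp only [Finset.mem_filter, Finset.mem_univ, true_and]
    tauto

/-- Composition lemma (Lemma 1): leakage of the ensemble of two interval
mechanisms is bounded by the sum of individual leakages. -/
theorem stmt_3 {m K J : ℕ} (x : Fin m → ℝ) (hx : ∀ i, 0 ≤ x i)
    (hsum : ∑ i, x i = 1)
    (S : Fin K → Finset (Fin m)) (R : Fin J → Finset (Fin m))
    (hSne : ∀ k, (S k).Nonempty) (hRne : ∀ j, (R j).Nonempty)
    (hSdisj : ∀ k k', k ≠ k' → Disjoint (S k) (S k'))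
    (hRdisj : ∀ j j', j ≠ j' → Disjoint (R j) (R j'))
    (hScov : ∀ i, ∃ k, i ∈ S k) (hRcov : ∀ i, ∃ j, i ∈ R j)
    (hint : ∀ k j, (S k ∩ R j).card ≤ 1) :
    1 - ∑ i, (x i)^2 ≤
      (1 - ∑ k, (∑ i ∈ S k, x i)^2) + (1 - ∑ j, (∑ i ∈ R j, x i)^2) := by
  set TS := univ.filter (fun p : Fin m × Fin m => p.1 ≠ p.2 ∧ ∃ k, p.1 ∈ S k ∧ p.2 ∈ S k) with hTS
  set TR := univ.filter (fun p : Fin m × Fin m => p.1 ≠ p.2 ∧ ∃ j, p.1 ∈ R j ∧ p.2 ∈ R j) with hTR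
  have hS := block_sum_sq x S hSdisj hScov
  have hR := block_sum_sq x R hRdisj hRcov
  -- off-diagonal total
  have hsq : (∑ i, x i)^2 = ∑ i, (x i)^2 + ∑ p ∈ (univ : Finset (Fin m)).offDiag, x p.1 * x p.2 := by
    rw [sq, Finset.sum_mul_sum, ← Finset.sum_product', ← Finset.diag_union_offDiag,
      Finset.sum_union (Finset.disjoint_diag_offDiag _), Finset.sum_diag]
    congr 1
    exact Finset.sum_congr rfl fun i _ => (sq (x i)).symm
  have hdisjTT : Disjoint TS TR := by
    rw [Finset.disjoint_left]
    rintro p hp hq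
    rw [hTS, Finset.mem_filter] at hp
    rw [hTR, Finset.mem_filter] at hq
    obtain ⟨-, hne, k, hk1, hk2⟩ := hp
    obtain ⟨-, -, j, hj1, hj2⟩ := hq
    have hsub : ({p.1, p.2} : Finset (Fin m)) ⊆ S k ∩ R j := by
      intro a ha
      rcases Finset.mem_insert.mp ha with h | h
      · subst h; exact Finset.mem_inter.mpr ⟨hk1, hj1⟩
      · rw [Finset.mem_singleton] at h; subst h; exact Finset.mem_inter.mpr ⟨hk2, hj2⟩
    have : ({p.1, p.2} : Finset (Fin m)).card = 2 := Finset.card_pair hne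
    have := Finset.card_le_card hsub
    have := hint k j
    omega
  have hsubTT : TS ∪ TR ⊆ (univ : Finset (Fin m)).offDiag := by
    intro p hp
    rcases Finset.mem_union.mp hp with h | h
    · rw [hTS, Finset.mem_filter] at h
      exact Finset.mem_offDiag.mpr ⟨Finset.mem_univ _, Finset.mem_univ _, h.2.1⟩
    · rw [hTR, Finset.mem_filter] at h
      exact Finset.mem_offDiag.mpr ⟨Finset.mem_univ _, Finset.mem_univ _, h.2.1⟩
  have hbound : ∑ p ∈ TS, x p.1 * x p.2 + ∑ p ∈ TR, x p.1 * x p.2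
      ≤ ∑ p ∈ (univ : Finset (Fin m)).offDiag, x p.1 * x p.2 := by
    rw [← Finset.sum_union hdisjTT]
    exact Finset.sum_le_sum_of_subset_of_nonneg hsubTT
      (fun p _ _ => mul_nonneg (hx _) (hx _))
  rw [hsum] at hsq
  rw [hS, hR]
  nlinarith [hbound, hsq]
end

section
/- Let Y₁,…,Yₙ be i.i.d. random variables taking values in [a,b] with mean μ, and let U₁,…,Uₙ be i.i.d. Uniform[a,b] random variables independent of the Yᵢ. Define Δᵢ = 1_{Yᵢ ≤ Uᵢ} and the estimator μ̂ₙ = (1/n) Σᵢ (Δᵢ(2Uᵢ − b) + (1 − Δᵢ)(2Uᵢ − a)). Then E[μ̂ₙ] = μ. -/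
/-!
Conditionally on `Y = y ∈ [a, b]`, a single summand has mean `y` over `U ~ Uniform[a, b]`:
it equals `2U - a - (b - a)·1_{U ≥ y}`, and `E[2U - a] = b`, `P(U ≥ y) = (b - y)/(b - a)`.
Independence of `Y` and `U` lets Fubini integrate `U` out first, so each summand has mean
`E[Y] = μ`, and so does their average.
-/

open MeasureTheory ProbabilityTheory Set

theorem ProbabilityTheory.IndepFun.integral_comp_eq_integral_integral {Ω α β E : Type*}
    [MeasurableSpace Ω] [MeasurableSpace α] [MeasurableSpace β] [NormedAddCommGroup E]
    [NormedSpace ℝ E] {P : Measure Ω} [IsFiniteMeasure P]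
    {X : Ω → α} {Y : Ω → β} (hXY : IndepFun X Y P) (hX : Measurable X) (hY : Measurable Y)
    {g : α × β → E} (hg : StronglyMeasurable g) (hint : Integrable (fun ω ↦ g (X ω, Y ω)) P) :
    ∫ ω, g (X ω, Y ω) ∂P = ∫ ω, ∫ y, g (X ω, y) ∂(P.map Y) ∂P := by
  have hmap := hXY.map_prod_eq_prod_map_map hX.aemeasurable hY.aemeasurable
  have hintProd : Integrable g ((P.map X).prod (P.map Y)) := by
    rw [← hmap]
    exact (integrable_map_measure hg.aestronglyMeasurable (hX.prodMk hY).aemeasurable).mpr hint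
  rw [← integral_map (hX.prodMk hY).aemeasurable hg.aestronglyMeasurable, hmap,
    integral_prod g hintProd, integral_map hX.aemeasurable]
  exact hg.integral_prod_right'.aestronglyMeasurable

noncomputable def uniformIcc (a b : ℝ) : Measure ℝ :=
  (ENNReal.ofReal (b - a))⁻¹ • volume.restrict (Icc a b)

lemma ae_mem_Icc_uniformIcc (a b : ℝ) : ∀ᵐ u ∂uniformIcc a b, u ∈ Icc a b :=
  Measure.ae_smul_measure (ae_restrict_mem measurableSet_Icc) _

noncomputable def intervalPrivateEstimate (a b y u : ℝ) : ℝ :=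
  (if y ≤ u then 1 else 0) * (2 * u - b) + (1 - if y ≤ u then 1 else 0) * (2 * u - a)

lemma intervalPrivateEstimate_eq (a b y u : ℝ) :
    intervalPrivateEstimate a b y u = 2 * u - a - (b - a) * (Ici y).indicator 1 u := by
  by_cases h : y ≤ u <;> simp [intervalPrivateEstimate, h]

lemma measurable_intervalPrivateEstimate (a b : ℝ) :
    Measurable fun p : ℝ × ℝ ↦ intervalPrivateEstimate a b p.1 p.2 := by
  have hle : Measurable fun p : ℝ × ℝ ↦ if p.1 ≤ p.2 then (1 : ℝ) else 0 :=
    Measurable.ite (measurableSet_le measurable_fst measurable_snd) measurable_const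
      measurable_const
  unfold intervalPrivateEstimate
  fun_prop

lemma abs_intervalPrivateEstimate_le {a b u : ℝ} (y : ℝ) (hu : u ∈ Icc a b) :
    |intervalPrivateEstimate a b y u| ≤ 2 * (|a| + |b|) := by
  obtain ⟨hau, hub⟩ := hu
  have := le_abs_self a; have := neg_abs_le a; have := le_abs_self b; have := neg_abs_le b
  by_cases h : y ≤ u <;> simp only [intervalPrivateEstimate, h, if_true, if_false] <;>
    rw [abs_le] <;> constructor <;> linarith

lemma integral_intervalPrivateEstimate_uniformIcc {a b y : ℝ} (hab : a < b) (hy : y ∈ Icc a b) :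
    ∫ u, intervalPrivateEstimate a b y u ∂uniformIcc a b = y := by
  have hlin : ∫ u in Icc a b, (2 * u - a) = (b - a) * b := by
    rw [integral_Icc_eq_integral_Ioc, ← intervalIntegral.integral_of_le hab.le,
      intervalIntegral.integral_sub (intervalIntegral.intervalIntegrable_id.const_mul 2)
        intervalIntegrable_const, intervalIntegral.integral_const_mul, integral_id,
      intervalIntegral.integral_const, smul_eq_mul]
    ring
  have hind : ∫ u in Icc a b, (Ici y).indicator 1 u = b - y := by
    rw [integral_indicator_one measurableSet_Ici, measureReal_restrict_apply measurableSet_Ici,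
      ← Ici_inter_Iic, ← inter_assoc, Ici_inter_Ici, sup_eq_left.2 hy.1, Ici_inter_Iic,
      Real.volume_real_Icc_of_le hy.2]
  have hlinInt : IntegrableOn (fun u : ℝ ↦ 2 * u - a) (Icc a b) :=
    (continuous_const.mul continuous_id |>.sub continuous_const).integrableOn_Icc
  have hindInt : IntegrableOn (fun u : ℝ ↦ (b - a) * (Ici y).indicator 1 u) (Icc a b) :=
    ((integrable_const 1).indicator measurableSet_Ici).const_mul _
  simp_rw [uniformIcc, integral_smul_measure, intervalPrivateEstimate_eq,
    integral_sub hlinInt hindInt, integral_const_mul, hlin, hind, ENNReal.toReal_inv,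
    ENNReal.toReal_ofReal (sub_nonneg.2 hab.le), smul_eq_mul]
  field_simp [sub_ne_zero.2 hab.ne']
  ring

section Estimator

variable {Ω : Type*} [MeasurableSpace Ω] {P : Measure Ω} {a b : ℝ} {Y U : Ω → ℝ}

lemma integrable_intervalPrivateEstimate [IsFiniteMeasure P] (hY : Measurable Y)
    (hU : Measurable U) (hUunif : P.map U = uniformIcc a b) :
    Integrable (fun ω ↦ intervalPrivateEstimate a b (Y ω) (U ω)) P := by
  have hUab : ∀ᵐ ω ∂P, U ω ∈ Icc a b :=
    ae_of_ae_map hU.aemeasurable (hUunif ▸ ae_mem_Icc_uniformIcc a b)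
  refine .of_bound
    ((measurable_intervalPrivateEstimate a b).comp (hY.prodMk hU)).aestronglyMeasurable
    (2 * (|a| + |b|)) ?_
  filter_upwards [hUab] with ω hω
  exact abs_intervalPrivateEstimate_le (Y ω) hω

lemma integral_intervalPrivateEstimate [IsFiniteMeasure P] (hab : a < b) (hY : Measurable Y)
    (hU : Measurable U) (hYab : ∀ᵐ ω ∂P, Y ω ∈ Icc a b) (hUunif : P.map U = uniformIcc a b)
    (hindep : IndepFun Y U P) :
    ∫ ω, intervalPrivateEstimate a b (Y ω) (U ω) ∂P = ∫ ω, Y ω ∂P := by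
  rw [hindep.integral_comp_eq_integral_integral hY hU
    (measurable_intervalPrivateEstimate a b).stronglyMeasurable
    (integrable_intervalPrivateEstimate hY hU hUunif), hUunif]
  refine integral_congr_ae ?_
  filter_upwards [hYab] with ω hω
  exact integral_intervalPrivateEstimate_uniformIcc hab hω

end Estimator

theorem stmt_6_general {Ω : Type*} [MeasurableSpace Ω] (P : Measure Ω) [IsProbabilityMeasure P]
    (a b : ℝ) (hab : a < b) (n : ℕ) (hn : 0 < n)
    (Y U : Fin n → Ω → ℝ)
    (hY : ∀ i, Measurable (Y i)) (hU : ∀ i, Measurable (U i))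
    (hYab : ∀ i ω, Y i ω ∈ Set.Icc a b)
    (hUunif : ∀ i, Measure.map (U i) P
      = (ENNReal.ofReal (b - a))⁻¹ • volume.restrict (Set.Icc a b))
    (hindep : ∀ i, ProbabilityTheory.IndepFun (Y i) (U i) P)
    (μ : ℝ) (hμ : ∀ i, ∫ ω, Y i ω ∂P = μ) :
    ∫ ω, (1 / (n:ℝ)) * ∑ i,
        ((if Y i ω ≤ U i ω then (1:ℝ) else 0) * (2 * U i ω - b)
          + (1 - if Y i ω ≤ U i ω then (1:ℝ) else 0) * (2 * U i ω - a)) ∂P = μ := by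
  change ∫ ω, (1 / (n : ℝ)) * ∑ i, intervalPrivateEstimate a b (Y i ω) (U i ω) ∂P = μ
  have hmean : ∀ i, ∫ ω, intervalPrivateEstimate a b (Y i ω) (U i ω) ∂P = μ := fun i ↦
    (integral_intervalPrivateEstimate hab (hY i) (hU i) (ae_of_all _ (hYab i)) (hUunif i)
      (hindep i)).trans (hμ i)
  rw [integral_const_mul, integral_finsetSum _ fun i _ ↦
    integrable_intervalPrivateEstimate (hY i) (hU i) (hUunif i)]
  simp only [hmean, Finset.sum_const, Finset.card_univ, Fintype.card_fin, nsmul_eq_mul]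
  field_simp

/-- Unbiasedness of the interval-private mean estimator: with i.i.d. `Yᵢ ∈ [a,b]`
of mean `μ`, independent `Uᵢ ~ Uniform[a,b]`, and `Δᵢ = 1_{Yᵢ ≤ Uᵢ}`,
`E[(1/n) Σᵢ (Δᵢ(2Uᵢ-b) + (1-Δᵢ)(2Uᵢ-a))] = μ`. -/
theorem stmt_6 {Ω : Type*} [MeasurableSpace Ω] (P : Measure Ω) [IsProbabilityMeasure P]
    (a b : ℝ) (hab : a < b) (n : ℕ) (hn : 0 < n)
    (Y U : Fin n → Ω → ℝ)
    (hY : ∀ i, Measurable (Y i)) (hU : ∀ i, Measurable (U i))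
    (hYab : ∀ i ω, Y i ω ∈ Set.Icc a b)
    (hiid : ∀ i j : Fin n, ProbabilityTheory.IdentDistrib (Y i) (Y j) P P)
    (hUunif : ∀ i, Measure.map (U i) P
      = (ENNReal.ofReal (b - a))⁻¹ • volume.restrict (Set.Icc a b))
    (hindep : ∀ i, ProbabilityTheory.IndepFun (Y i) (U i) P)
    (μ : ℝ) (hμ : ∀ i, ∫ ω, Y i ω ∂P = μ) :
    ∫ ω, (1 / (n:ℝ)) * ∑ i,
        ((if Y i ω ≤ U i ω then (1:ℝ) else 0) * (2 * U i ω - b)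
          + (1 - if Y i ω ≤ U i ω then (1:ℝ) else 0) * (2 * U i ω - a)) ∂P = μ :=
  stmt_6_general P a b hab n hn Y U hY hU hYab hUunif hindep μ hμ
end

section
/- In the setting of the interval-private mean estimator: with Y ∈ [a,b], U ~ Uniform[a,b] independent of Y, and Δ = 1_{Y ≤ U}, the conditional expectation E[Δ(2U − b) + (1 − Δ)(2U − a) | Y] = Y almost surely. -/
/-!
Given `Y`, the variable `U` is still uniform on `[a, b]` by independence, so the conditional
expectation is the integral of `u ↦ 1{Y ≤ u}(2u - b) + 1{u < Y}(2u - a)` against the uniform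
law. Since this integrand is `2u - a - (b - a) 1{Y ≤ u}`, its integral over `[a, b]` is
`b (b - a) - (b - a)(b - Y) = (b - a) Y`.
-/

open MeasureTheory ProbabilityTheory

namespace ProbabilityTheory

variable {α β Ω F : Type*} {mα : MeasurableSpace α} {mβ : MeasurableSpace β}
  [MeasurableSpace Ω] [StandardBorelSpace Ω] [Nonempty Ω]
  [NormedAddCommGroup F] [NormedSpace ℝ F] [CompleteSpace F]
  {μ : Measure α} [IsFiniteMeasure μ] {X : α → β} {Y : α → Ω}

theorem IndepFun.condDistrib_ae_eq_const (hXY : IndepFun X Y μ) (hX : Measurable X)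
    (hY : Measurable Y) : condDistrib Y X μ =ᵐ[μ.map X] Kernel.const β (μ.map Y) := by
  refine condDistrib_ae_eq_of_measure_eq_compProd X hY.aemeasurable ?_
  rw [Measure.compProd_const]
  exact (indepFun_iff_map_prod_eq_prod_map_map hX.aemeasurable hY.aemeasurable).mp hXY

theorem IndepFun.condExp_comp_prod_ae_eq_integral_map (hXY : IndepFun X Y μ)
    (hX : Measurable X) (hY : Measurable Y) {f : β × Ω → F} (hf : StronglyMeasurable f)
    (hf_int : Integrable (fun a => f (X a, Y a)) μ) :
    μ[fun a => f (X a, Y a) | mβ.comap X] =ᵐ[μ] fun a => ∫ y, f (X a, y) ∂(μ.map Y) := by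
  refine (condExp_prod_ae_eq_integral_condDistrib hX hY.aemeasurable hf hf_int).trans ?_
  filter_upwards [ae_of_ae_map hX.aemeasurable (hXY.condDistrib_ae_eq_const hX hY)]
    with a ha
  rw [ha, Kernel.const_apply]

end ProbabilityTheory

section IntervalSample

variable {a b : ℝ}

-- The summand `Δ (2U - b) + (1 - Δ) (2U - a)` of the estimator at `Y = y`, `U = u`,
-- where `Δ = 1{Y ≤ U}`.
noncomputable def intervalSample (a b y u : ℝ) : ℝ :=
  (if y ≤ u then 1 else 0) * (2 * u - b) + (1 - if y ≤ u then 1 else 0) * (2 * u - a)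

theorem intervalSample_eq (y u : ℝ) :
    intervalSample a b y u = 2 * u - a - (Set.Ici y).indicator (fun _ => b - a) u := by
  by_cases h : y ≤ u <;> simp [intervalSample, h]

theorem measurable_intervalSample :
    Measurable fun p : ℝ × ℝ => intervalSample a b p.1 p.2 := by
  have hle : Measurable fun p : ℝ × ℝ => if p.1 ≤ p.2 then (1 : ℝ) else 0 :=
    Measurable.ite (measurableSet_le measurable_fst measurable_snd) measurable_const
      measurable_const
  unfold intervalSample
  fun_prop

theorem abs_intervalSample_le {y u : ℝ} (hu : u ∈ Set.Icc a b) :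
    |intervalSample a b y u| ≤ 2 * (|a| + |b|) := by
  obtain ⟨hau, hub⟩ := hu
  rw [abs_le]
  by_cases h : y ≤ u <;> simp only [intervalSample, h, if_true, if_false] <;>
    constructor <;> linarith [neg_abs_le a, le_abs_self a, neg_abs_le b, le_abs_self b]

theorem setIntegral_Icc_intervalSample (hab : a ≤ b) {y : ℝ} (hy : y ∈ Set.Icc a b) :
    ∫ u in Set.Icc a b, intervalSample a b y u = (b - a) * y := by
  have hlin : ∫ u in Set.Icc a b, (2 * u - a) = b * (b - a) := by
    rw [integral_Icc_eq_integral_Ioc, ← intervalIntegral.integral_of_le hab,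
      intervalIntegral.integral_sub (intervalIntegral.intervalIntegrable_id.const_mul 2)
        intervalIntegrable_const, intervalIntegral.integral_const_mul, integral_id,
      intervalIntegral.integral_const, smul_eq_mul]
    ring
  have hind : ∫ u in Set.Icc a b, (Set.Ici y).indicator (fun _ => b - a) u
      = (b - y) * (b - a) := by
    have hIcc : Set.Ici y ∩ Set.Icc a b = Set.Icc y b := by
      ext u
      simp only [Set.mem_inter_iff, Set.mem_Ici, Set.mem_Icc]
      exact ⟨fun h => ⟨h.1, h.2.2⟩, fun h => ⟨h.1, hy.1.trans h.1, h.2⟩⟩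
    rw [integral_indicator measurableSet_Ici, Measure.restrict_restrict measurableSet_Ici, hIcc,
      setIntegral_const, measureReal_def, Real.volume_Icc,
      ENNReal.toReal_ofReal (sub_nonneg.mpr hy.2), smul_eq_mul]
  simp_rw [intervalSample_eq]
  have hcont : Continuous fun u : ℝ => 2 * u - a := by fun_prop
  rw [integral_sub hcont.integrableOn_Icc ((integrable_const _).indicator measurableSet_Ici),
    hlin, hind]
  ring

theorem integral_uniform_intervalSample (hab : a < b) {y : ℝ} (hy : y ∈ Set.Icc a b) :
    ∫ u, intervalSample a b y u
        ∂((ENNReal.ofReal (b - a))⁻¹ • volume.restrict (Set.Icc a b)) = y := by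
  rw [integral_smul_measure, setIntegral_Icc_intervalSample hab.le hy, ENNReal.toReal_inv,
    ENNReal.toReal_ofReal (sub_pos.mpr hab).le, smul_eq_mul,
    inv_mul_cancel_left₀ (sub_pos.mpr hab).ne']

end IntervalSample

/-- Conditional unbiasedness of a single interval-private observation:
`E[Δ(2U-b) + (1-Δ)(2U-a) | Y] = Y` almost surely. -/
theorem stmt_7 {Ω : Type*} [m0 : MeasurableSpace Ω] (P : Measure Ω) [IsProbabilityMeasure P]
    (a b : ℝ) (hab : a < b) (Y U : Ω → ℝ)
    (hY : Measurable Y) (hU : Measurable U)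
    (hYab : ∀ ω, Y ω ∈ Set.Icc a b)
    (hUunif : Measure.map U P
      = (ENNReal.ofReal (b - a))⁻¹ • volume.restrict (Set.Icc a b))
    (hindep : ProbabilityTheory.IndepFun Y U P) :
    P[fun ω => (if Y ω ≤ U ω then (1:ℝ) else 0) * (2 * U ω - b)
        + (1 - if Y ω ≤ U ω then (1:ℝ) else 0) * (2 * U ω - a)
      | MeasurableSpace.comap Y (borel ℝ)] =ᵐ[P] Y := by
  have hU_mem : ∀ᵐ ω ∂P, U ω ∈ Set.Icc a b := by
    refine ae_of_ae_map hU.aemeasurable ?_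
    rw [hUunif]
    exact (ae_restrict_mem measurableSet_Icc).filter_mono (Measure.ae_smul_measure_le _)
  have h_int : Integrable (fun ω => intervalSample a b (Y ω) (U ω)) P :=
    .of_bound (measurable_intervalSample.comp (hY.prodMk hU)).aestronglyMeasurable _
      (hU_mem.mono fun ω hω => abs_intervalSample_le hω)
  refine (hindep.condExp_comp_prod_ae_eq_integral_map hY hU
    measurable_intervalSample.stronglyMeasurable h_int).trans (.of_forall fun ω => ?_)
  rw [hUunif]
  exact integral_uniform_intervalSample hab (hYab ω)
end

section
/- Let Y and Z be real random variables with a joint density. If for every measurable set A and all y₁, y₂ in the support of Y, the ratio P(Z ∈ A | Y = y₁)/P(Z ∈ A | Y = y₂) ≤ e^α for some finite α (α-local differential privacy), and additionally the conditional density of Y given Z = z is proportional to the unconditional density of Y restricted to a set S_z (interval privacy), then S_z equals the full support of Y for almost every z, and consequently Y and Z are independent. -/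
open MeasureTheory

/-- Intersection of interval privacy and local differential privacy is trivial:
if the posterior density of `Y` given `Z = z` is the prior restricted to `S z`
(interval privacy) and the mechanism is `α`-locally differentially private with
finite `α`, then `S z` contains the full support of `Y` for every `z` and the
posterior equals the prior, i.e. `Y` and `Z` are independent. -/
theorem stmt_13 (α : ℝ)
    (pY : ℝ → ℝ) (hpY : ∀ y, 0 ≤ pY y) (hpYmeas : Measurable pY)
    (hpY1 : ∫ y, pY y = 1)
    (f : ℝ → ℝ → ℝ)  -- f y z = posterior density of Y at y given Z = z
    (S : ℝ → Set ℝ) (hS : ∀ z, MeasurableSet (S z)) (c : ℝ → ℝ)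
    (hIP : ∀ z y, f y z = c z * Set.indicator (S z) pY y)
    (hnorm : ∀ z, ∫ y in S z, f y z = 1)
    (hLDP : ∀ z : ℝ, ∀ y₁ ∈ {y | 0 < pY y}, ∀ y₂ ∈ {y | 0 < pY y},
      f y₁ z * pY y₂ ≤ Real.exp α * (f y₂ z * pY y₁)) :
    ∀ z : ℝ, {y | 0 < pY y} ⊆ S z ∧ ∀ y, f y z = pY y := by
  intro z
  -- rewrite the normalization using interval privacy
  have hI : ∫ y in S z, f y z = c z * ∫ y in S z, pY y := by
    calc ∫ y in S z, f y z = ∫ y in S z, c z * Set.indicator (S z) pY y := by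
          simp only [hIP]
      _ = c z * ∫ y in S z, Set.indicator (S z) pY y := MeasureTheory.integral_const_mul _ _
      _ = c z * ∫ y in S z, pY y := by
          congr 1
          refine setIntegral_congr_fun (hS z) (fun y hy => ?_)
          exact Set.indicator_of_mem hy pY
  have hnz : c z * ∫ y in S z, pY y = 1 := by rw [← hI]; exact hnorm z
  have hInonneg : 0 ≤ ∫ y in S z, pY y :=
    setIntegral_nonneg (hS z) (fun y _ => hpY y)
  have hIne : (∫ y in S z, pY y) ≠ 0 := by
    intro h; rw [h, mul_zero] at hnz; exact one_ne_zero hnz.symm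
  have hIpos : 0 < ∫ y in S z, pY y := lt_of_le_of_ne hInonneg (Ne.symm hIne)
  have hcpos : 0 < c z := by
    by_contra h
    push_neg at h
    nlinarith
  -- there is a point of positive density inside S z
  have hex : ∃ y₁ ∈ S z, 0 < pY y₁ := by
    by_contra h
    push_neg at h
    have hzero : ∀ y ∈ S z, pY y = 0 := fun y hy =>
      le_antisymm (h y hy) (hpY y)
    have : (∫ y in S z, pY y) = 0 := by
      rw [setIntegral_congr_fun (hS z) hzero]
      simp
    exact hIne this
  obtain ⟨y₁, hy₁S, hy₁pos⟩ := hex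
  -- support inclusion
  have hsub : {y | 0 < pY y} ⊆ S z := by
    intro y hy
    by_contra hnot
    have hf0 : f y z = 0 := by
      rw [hIP, Set.indicator_of_notMem hnot, mul_zero]
    have hldp := hLDP z y₁ hy₁pos y hy
    rw [hf0] at hldp
    have hf1 : f y₁ z = c z * pY y₁ := by
      rw [hIP, Set.indicator_of_mem hy₁S]
    rw [hf1] at hldp
    have : 0 < c z * pY y₁ * pY y := mul_pos (mul_pos hcpos hy₁pos) hy
    nlinarith [Real.exp_pos α]
  -- off S z the density vanishes
  have hoff : ∀ y, y ∉ S z → pY y = 0 := by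
    intro y hy
    by_contra h
    exact hy (hsub (lt_of_le_of_ne (hpY y) (Ne.symm h)))
  have hind : Set.indicator (S z) pY = pY := by
    funext y
    by_cases hy : y ∈ S z
    · exact Set.indicator_of_mem hy pY
    · rw [Set.indicator_of_notMem hy, hoff y hy]
  have hIone : (∫ y in S z, pY y) = 1 := by
    rw [← integral_indicator (hS z), hind, hpY1]
  have hc1 : c z = 1 := by rw [hIone, mul_one] at hnz; exact hnz
  refine ⟨hsub, fun y => ?_⟩
  rw [hIP, hc1, hind, one_mul]
end

section
/- Let ε be a standard logistic random variable (CDF F(s) = 1/(1+e^{−s})). Then for every real s, ∫_{−∞}^{s} x · e^x/(1+e^x)² dx = −H(1/(1+e^{−s})), where H(z) = −z log z − (1−z) log(1−z) is the binary entropy function. -/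
/-!
With `σ x = eˣ / (1 + eˣ)` the logistic CDF, the function `x σ x - log (1 + eˣ)` is an
antiderivative of `x σ' x`, vanishes at `-∞`, and equals `-binEnt (σ s)` at `s`, because
`log (σ s) = s - log (1 + eˢ)` and `log (1 - σ s) = -log (1 + eˢ)`. The integrand is
integrable on `(-∞, s]` since there `|x| ≤ 2 e^{-x/2} + |s|` and `σ' x ≤ eˣ`.
-/

open Real Set Filter MeasureTheory
open scoped Topology

/-- Binary entropy function. -/
noncomputable def binEnt (z : ℝ) : ℝ := -z * Real.log z - (1 - z) * Real.log (1 - z)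

lemma exp_div_one_add_exp_sq_le_exp (x : ℝ) : exp x / (1 + exp x) ^ 2 ≤ exp x := by
  rw [div_le_iff₀ (by positivity)]
  exact le_mul_of_one_le_right (exp_pos x).le (one_le_pow₀ (by linarith [exp_pos x]))

lemma abs_le_two_mul_exp_neg_half_add_abs {x s : ℝ} (hx : x ≤ s) :
    |x| ≤ 2 * exp (-x / 2) + |s| := by
  have hexp := add_one_le_exp (-x / 2)
  rw [abs_le]
  constructor <;> linarith [le_abs_self s, abs_nonneg s, exp_pos (-x / 2)]

lemma integrableOn_mul_exp_div_one_add_exp_sq_Iic (s : ℝ) :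
    IntegrableOn (fun x => x * (exp x / (1 + exp x) ^ 2)) (Iic s) := by
  have hdom : IntegrableOn (fun x => 2 * exp (1 / 2 * x) + |s| * exp x) (Iic s) :=
    ((integrableOn_exp_mul_Iic one_half_pos s).const_mul 2).add
      ((integrableOn_exp_Iic s).const_mul |s|)
  refine hdom.mono' (by fun_prop) ?_
  filter_upwards [ae_restrict_mem measurableSet_Iic] with x hx
  calc ‖x * (exp x / (1 + exp x) ^ 2)‖ = |x| * (exp x / (1 + exp x) ^ 2) := by
        rw [norm_mul, norm_eq_abs, norm_of_nonneg (by positivity)]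
    _ ≤ (2 * exp (-x / 2) + |s|) * exp x :=
        mul_le_mul (abs_le_two_mul_exp_neg_half_add_abs hx) (exp_div_one_add_exp_sq_le_exp x)
          (by positivity) (by positivity)
    _ = 2 * exp (1 / 2 * x) + |s| * exp x := by
        rw [add_mul, mul_assoc, ← exp_add]
        ring_nf

lemma hasDerivAt_mul_exp_div_one_add_exp_sub_log (x : ℝ) :
    HasDerivAt (fun x => x * (exp x / (1 + exp x)) - log (1 + exp x))
      (x * (exp x / (1 + exp x) ^ 2)) x := by
  have hne : 1 + exp x ≠ 0 := by positivity
  have hden : HasDerivAt (fun x => 1 + exp x) (exp x) x := (hasDerivAt_exp x).const_add 1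
  have hσ := (hasDerivAt_exp x).div hden hne
  refine (((hasDerivAt_id' x).mul hσ).sub (hden.log hne)).congr_deriv ?_
  simp only [Pi.div_apply]
  field_simp
  ring

lemma tendsto_mul_exp_div_one_add_exp_sub_log_atBot :
    Tendsto (fun x => x * (exp x / (1 + exp x)) - log (1 + exp x)) atBot (𝓝 0) := by
  have hxexp : Tendsto (fun x : ℝ => x * exp x) atBot (𝓝 0) := by
    simpa [Function.comp_def] using
      ((tendsto_pow_mul_exp_neg_atTop_nhds_zero 1).comp tendsto_neg_atBot_atTop).neg
  have hden : Tendsto (fun x : ℝ => 1 + exp x) atBot (𝓝 1) := by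
    simpa using tendsto_exp_atBot.const_add 1
  have hlog := (continuousAt_log one_ne_zero).tendsto.comp hden
  simpa [mul_div_assoc] using (hxexp.div hden one_ne_zero).sub hlog

lemma neg_binEnt_one_div_one_add_exp_neg (s : ℝ) :
    -binEnt (1 / (1 + exp (-s))) = s * (exp s / (1 + exp s)) - log (1 + exp s) := by
  have hne : 1 + exp s ≠ 0 := by positivity
  have hσ : 1 / (1 + exp (-s)) = exp s / (1 + exp s) := by
    rw [exp_neg]
    field_simp
    ring
  have h1σ : 1 - exp s / (1 + exp s) = (1 + exp s)⁻¹ := by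
    field_simp
    ring
  rw [binEnt, hσ, h1σ, log_div (exp_pos s).ne' hne, log_inv, log_exp]
  field_simp
  ring

/-- Partial first moment of the standard logistic distribution:
`∫_{-∞}^s x e^x/(1+e^x)² dx = -H(1/(1+e^{-s}))`. -/
theorem stmt_15 (s : ℝ) :
    ∫ x in Set.Iic s, x * (Real.exp x / (1 + Real.exp x)^2) =
      -binEnt (1 / (1 + Real.exp (-s))) := by
  rw [neg_binEnt_one_div_one_add_exp_neg,
    integral_Iic_of_hasDerivAt_of_tendsto'
      (fun x _ => hasDerivAt_mul_exp_div_one_add_exp_sub_log x)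
      (integrableOn_mul_exp_div_one_add_exp_sq_Iic s)
      tendsto_mul_exp_div_one_add_exp_sub_log_atBot, sub_zero]
end

section
/- Let Y have continuous CDF F_Y, and let U be an independent random variable whose essential support lies in (−∞, F_Y^{−1}(τ)]^c for some τ ∈ (0,1), i.e., P(F_Y(U) ≥ τ) = 1. Then the distribution of Y is not identifiable from observations of (U, 1_{Y ≤ U}): there exist two distinct distributions F₁ ≠ F₂ agreeing with each other on [F_Y^{−1}(τ), ∞) such that the joint law of (U, 1_{Y ≤ U}) is the same under both. -/
open MeasureTheory

/-- Non-identifiability of the distribution of `Y` when the Case-I anchor `U`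
avoids the left `τ`-tail: there exist two distinct continuous CDFs agreeing on
`[F_Y^{-1}(τ), ∞)` that induce the same law of the observed data `(U, 1_{Y≤U})`,
i.e. they agree almost everywhere with respect to the law of `U`. -/
theorem stmt_18 {Ω : Type*} [MeasurableSpace Ω] (P : Measure Ω) [IsProbabilityMeasure P]
    (U : Ω → ℝ) (hU : Measurable U)
    (FY : ℝ → ℝ) (hFYcont : Continuous FY) (hFYmono : Monotone FY)
    (hFYbot : Filter.Tendsto FY Filter.atBot (nhds 0))
    (hFYtop : Filter.Tendsto FY Filter.atTop (nhds 1))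
    (τ : ℝ) (hτ : τ ∈ Set.Ioo (0:ℝ) 1)
    (q : ℝ) (hq : FY q = τ)  -- q = F_Y^{-1}(τ)
    (hUtail : P {ω | τ ≤ FY (U ω)} = 1) :
    ∃ F₁ F₂ : ℝ → ℝ,
      Continuous F₁ ∧ Monotone F₁ ∧
        Filter.Tendsto F₁ Filter.atBot (nhds 0) ∧
        Filter.Tendsto F₁ Filter.atTop (nhds 1) ∧
      Continuous F₂ ∧ Monotone F₂ ∧
        Filter.Tendsto F₂ Filter.atBot (nhds 0) ∧
        Filter.Tendsto F₂ Filter.atTop (nhds 1) ∧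
      F₁ ≠ F₂ ∧
      (∀ y, q ≤ y → F₁ y = F₂ y) ∧
      (∀ᵐ u ∂(Measure.map U P), F₁ u = F₂ u) := by
  obtain ⟨hτ0, hτ1⟩ := hτ
  set F₂ : ℝ → ℝ := fun y => max (FY y - τ) 0 + (min (FY y) τ)^2 / τ with hF₂def
  -- FY is nonnegative
  have hFY0 : ∀ y, 0 ≤ FY y := by
    intro y
    refine le_of_tendsto hFYbot ?_
    exact (Filter.eventually_le_atBot y).mono fun z hz => hFYmono hz
  -- continuity of F₂
  have hF₂cont : Continuous F₂ := by
    apply Continuous.add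
    · exact (hFYcont.sub continuous_const).max continuous_const
    · exact (((hFYcont.min continuous_const).pow 2).div_const τ)
  -- monotonicity of F₂
  have hF₂mono : Monotone F₂ := by
    intro a b hab
    have h1 : FY a ≤ FY b := hFYmono hab
    have h2 : min (FY a) τ ≤ min (FY b) τ := min_le_min h1 le_rfl
    have h3 : 0 ≤ min (FY a) τ := le_min (hFY0 a) hτ0.le
    have h4 : (min (FY a) τ)^2 ≤ (min (FY b) τ)^2 := by nlinarith
    have h5 : max (FY a - τ) 0 ≤ max (FY b - τ) 0 := max_le_max (by linarith) le_rfl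
    have h6 : (min (FY a) τ)^2 / τ ≤ (min (FY b) τ)^2 / τ := by
      gcongr
    simpa [hF₂def] using add_le_add h5 h6
  -- F₂ equals FY wherever FY ≥ τ
  have hagree : ∀ u, τ ≤ FY u → FY u = F₂ u := by
    intro u hu
    have : max (FY u - τ) 0 = FY u - τ := max_eq_left (by linarith)
    have hmin : min (FY u) τ = τ := min_eq_right hu
    simp only [hF₂def, this, hmin]
    field_simp
    ring
  -- limits of F₂
  have hF₂bot : Filter.Tendsto F₂ Filter.atBot (nhds 0) := by
    have : Filter.Tendsto (fun y => max (FY y - τ) 0 + (min (FY y) τ)^2 / τ)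
        Filter.atBot (nhds (max (0 - τ) 0 + (min 0 τ)^2 / τ)) := by
      exact (((hFYbot.sub_const τ).max tendsto_const_nhds).add
        (((hFYbot.min tendsto_const_nhds).pow 2).div_const τ))
    simpa [hF₂def, max_eq_right (by linarith : -τ ≤ (0:ℝ)),
      min_eq_left hτ0.le] using this
  have hF₂top : Filter.Tendsto F₂ Filter.atTop (nhds 1) := by
    have : Filter.Tendsto (fun y => max (FY y - τ) 0 + (min (FY y) τ)^2 / τ)
        Filter.atTop (nhds (max (1 - τ) 0 + (min 1 τ)^2 / τ)) := by
      exact (((hFYtop.sub_const τ).max tendsto_const_nhds).add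
        (((hFYtop.min tendsto_const_nhds).pow 2).div_const τ))
    have e1 : max (1 - τ) 0 = 1 - τ := max_eq_left (by linarith)
    have e2 : min (1:ℝ) τ = τ := min_eq_right hτ1.le
    have e3 : max (1 - τ) 0 + (min 1 τ)^2 / τ = 1 := by
      rw [e1, e2]; field_simp; ring
    rw [e3] at this
    exact this
  -- find a point b where FY b = τ/2, hence F₁ b ≠ F₂ b
  have hexz : ∃ z, z ≤ q ∧ FY z < τ/2 := by
    have h1 : ∀ᶠ z in Filter.atBot, FY z < τ/2 :=
      hFYbot.eventually (gt_mem_nhds (by linarith : (0:ℝ) < τ/2))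
    have h2 : ∀ᶠ z in Filter.atBot, z ≤ q := Filter.eventually_le_atBot q
    obtain ⟨z, hz1, hz2⟩ := (h2.and h1).exists
    exact ⟨z, hz1, hz2⟩
  obtain ⟨z, hzq, hzτ⟩ := hexz
  have hmem : (τ/2) ∈ Set.Icc (FY z) (FY q) := ⟨hzτ.le, by rw [hq]; linarith⟩
  obtain ⟨b, _, hb⟩ := intermediate_value_Icc hzq hFYcont.continuousOn hmem
  have hne : FY ≠ F₂ := by
    intro h
    have hb2 : FY b = F₂ b := congrFun h b
    have : F₂ b = (τ/2)^2 / τ := by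
      simp only [hF₂def, hb]
      rw [max_eq_right (by linarith), min_eq_left (by linarith)]
      ring
    rw [hb, this] at hb2
    field_simp at hb2
    nlinarith
  refine ⟨FY, F₂, hFYcont, hFYmono, hFYbot, hFYtop, hF₂cont, hF₂mono, hF₂bot, hF₂top,
    hne, ?_, ?_⟩
  · intro y hy
    exact hagree y (by rw [← hq]; exact hFYmono hy)
  · rw [Filter.eventually_iff, mem_ae_iff]
    have hS : MeasurableSet {u : ℝ | FY u = F₂ u} :=
      measurableSet_eq_fun hFYcont.measurable hF₂cont.measurable
    rw [Measure.map_apply hU hS.compl]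
    have hsub : U ⁻¹' {u : ℝ | FY u = F₂ u}ᶜ ⊆ {ω | τ ≤ FY (U ω)}ᶜ := by
      intro ω hω
      simp only [Set.mem_preimage, Set.mem_compl_iff, Set.mem_setOf_eq] at hω ⊢
      intro hge
      exact hω (hagree _ hge)
    refine measure_mono_null hsub ?_
    have hmeas : MeasurableSet {ω | τ ≤ FY (U ω)} :=
      (hFYcont.measurable.comp hU) measurableSet_Ici
    rw [measure_compl hmeas (measure_ne_top P _), hUtail, measure_univ]
    simp
end
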